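/- For any double complex A of complex vector spaces and any integers p, q, there is a natural isomorphism H^{p+q−2}(L_{p,q}(A)) ≅ ker(∂∂̄ : A^{p−1,q−1} → A^{p,q}) / (∂(A^{p−2,q−1}) + ∂̄(A^{p−1,q−2})), i.e. the (p+q−2)-nd cohomology of the Schweitzer complex is the Aeppli cohomology of A in bidegree (p−1,q−1). -/

import Mathlib

open DirectSum

/-- A double complex of complex vector spaces: a family of `ℂ`-vector spaces `X r s`
(`r, s ∈ ℤ`) with differentials `∂ : X r s → X (r+1) s` and `∂̄ : X r s → X r (s+1)`
satisfying `∂∘∂ = 0`, `∂̄∘∂̄ = 0` and `∂∘∂̄ + ∂̄∘∂ = 0`. -/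
structure DoubleComplex : Type 1 where
  X : ℤ → ℤ → Type
  [acg : ∀ r s, AddCommGroup (X r s)]
  [mod : ∀ r s, Module ℂ (X r s)]
  d1 : ∀ r s, X r s →ₗ[ℂ] X (r + 1) s
  d2 : ∀ r s, X r s →ₗ[ℂ] X r (s + 1)
  d1_d1 : ∀ r s (x : X r s), d1 (r + 1) s (d1 r s x) = 0
  d2_d2 : ∀ r s (x : X r s), d2 r (s + 1) (d2 r s x) = 0
  anticomm : ∀ r s (x : X r s), d1 r (s + 1) (d2 r s x) + d2 (r + 1) s (d1 r s x) = 0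

attribute [instance] DoubleComplex.acg DoubleComplex.mod

/-- The bidegrees contributing to the degree-`k` piece of the Schweitzer complex `L_{p,q}`:
for `k ≤ p+q-2` the bidegrees `(r,s)` with `r+s = k`, `r < p`, `s < q`; for `k ≥ p+q-1`
the bidegrees `(r,s)` with `r+s = k+1`, `r ≥ p`, `s ≥ q`. -/
def schwCond (p q k : ℤ) (rs : ℤ × ℤ) : Prop :=
  (k ≤ p + q - 2 ∧ rs.1 + rs.2 = k ∧ rs.1 < p ∧ rs.2 < q) ∨
  (p + q - 1 ≤ k ∧ rs.1 + rs.2 = k + 1 ∧ p ≤ rs.1 ∧ q ≤ rs.2)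

instance (p q k : ℤ) : DecidablePred (schwCond p q k) := fun rs => by
  unfold schwCond; infer_instance

/-- Index type for the degree-`k` piece of the Schweitzer complex. -/
abbrev SchwIdx (p q k : ℤ) := {rs : ℤ × ℤ // schwCond p q k rs}

/-- The degree-`k` piece of the Schweitzer complex `L_{p,q}(A)`. -/
abbrev SchwL (A : DoubleComplex) (p q k : ℤ) : Type :=
  ⨁ i : SchwIdx p q k, A.X i.1.1 i.1.2

/-- The differential of the Schweitzer complex: in degrees `k ≤ p+q-3` the total
differential `∂ + ∂̄` followed by the projection to the components of `L^{k+1}`;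
in degree `p+q-2` the map `∂∂̄ : A^{p-1,q-1} → A^{p,q}`; in degrees `k ≥ p+q-1`
the total differential `∂ + ∂̄`. -/
noncomputable def schwD (A : DoubleComplex) (p q k : ℤ) :
    SchwL A p q k →ₗ[ℂ] SchwL A p q (k + 1) :=
  DirectSum.toModule ℂ _ _ fun i =>
    if _hk : k = p + q - 2 then
      (DirectSum.lof ℂ (SchwIdx p q (k + 1)) (fun j => A.X j.1.1 j.1.2)
        ⟨(i.1.1 + 1, i.1.2 + 1), by
          obtain ⟨⟨r, s⟩, hi⟩ := i
          simp only [schwCond] at hi ⊢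
          omega⟩).comp ((A.d1 i.1.1 (i.1.2 + 1)).comp (A.d2 i.1.1 i.1.2))
    else
      (if h : schwCond p q (k + 1) (i.1.1 + 1, i.1.2) then
        (DirectSum.lof ℂ (SchwIdx p q (k + 1)) (fun j => A.X j.1.1 j.1.2)
          ⟨(i.1.1 + 1, i.1.2), h⟩).comp (A.d1 i.1.1 i.1.2)
       else 0)
      +
      (if h : schwCond p q (k + 1) (i.1.1, i.1.2 + 1) then
        (DirectSum.lof ℂ (SchwIdx p q (k + 1)) (fun j => A.X j.1.1 j.1.2)
          ⟨(i.1.1, i.1.2 + 1), h⟩).comp (A.d2 i.1.1 i.1.2)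
       else 0)

/-- Transport of the pieces of the Schweitzer complex along an equality of degrees. -/
def schwLCast (A : DoubleComplex) (p q : ℤ) {k k' : ℤ} (h : k = k') :
    SchwL A p q k ≃ₗ[ℂ] SchwL A p q k' := by subst h; exact LinearEquiv.refl ℂ _

/-- The differential of the Schweitzer complex arriving in degree `k`. -/
noncomputable def schwDFrom (A : DoubleComplex) (p q k : ℤ) :
    SchwL A p q (k - 1) →ₗ[ℂ] SchwL A p q k :=
  (schwLCast A p q (by omega : k - 1 + 1 = k)).toLinearMap.comp (schwD A p q (k - 1))

/-- The `k`-th cohomology of the Schweitzer complex `L_{p,q}(A)`: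
`ker(d^k) / im(d^{k-1})`. -/
noncomputable abbrev SchwCoh (A : DoubleComplex) (p q k : ℤ) : Type :=
  LinearMap.ker (schwD A p q k) ⧸
    Submodule.comap (LinearMap.ker (schwD A p q k)).subtype
      (LinearMap.range (schwDFrom A p q k))


/-- Transport of the components of a double complex along equalities of bidegrees. -/
noncomputable def DoubleComplex.castX (A : DoubleComplex) {r s r' s' : ℤ}
    (h1 : r = r') (h2 : s = s') : A.X r s ≃ₗ[ℂ] A.X r' s' := by
  subst h1; subst h2; exact LinearEquiv.refl ℂ _

/-- The operator `∂∂̄ : A^{p-1,q-1} → A^{p,q}`. -/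
noncomputable def ddbar (A : DoubleComplex) (p q : ℤ) :
    A.X (p - 1) (q - 1) →ₗ[ℂ] A.X p q :=
  (A.castX (show p - 1 + 1 = p by omega) (show q - 1 + 1 = q by omega)).toLinearMap.comp
    ((A.d1 (p - 1) (q - 1 + 1)).comp (A.d2 (p - 1) (q - 1)))

/-- The Aeppli cohomology of a double complex in bidegree `(p-1,q-1)`:
`ker ∂∂̄ / (im ∂ + im ∂̄)` at `A^{p-1,q-1}`. -/
noncomputable abbrev Aeppli (A : DoubleComplex) (p q : ℤ) : Type :=
  ↥(LinearMap.ker (ddbar A p q)) ⧸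
    Submodule.comap (LinearMap.ker (ddbar A p q)).subtype
      (LinearMap.range ((A.castX (show p - 2 + 1 = p - 1 by omega) rfl).toLinearMap.comp
          (A.d1 (p - 2) (q - 1))) ⊔
        LinearMap.range ((A.castX rfl (show q - 2 + 1 = q - 1 by omega)).toLinearMap.comp
          (A.d2 (p - 1) (q - 2))))

/-!
In degree `p+q-2` the Schweitzer complex has the single summand `A^{p-1,q-1}`; the differential
leaving it is `∂∂̄ : A^{p-1,q-1} → A^{p,q}`, and the one arriving comes from
`A^{p-2,q-1} ⊕ A^{p-1,q-2}`, acting by `∂` on the first summand and by `∂̄` on the second.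
Identifying `L^{p+q-2}` with `A^{p-1,q-1}` therefore carries the cycles onto `ker ∂∂̄` and the
boundaries onto `im ∂ + im ∂̄`, and so induces the isomorphism of subquotients.
-/

noncomputable def LinearEquiv.subquotientCongr {R M N : Type*} [Ring R] [AddCommGroup M]
    [Module R M] [AddCommGroup N] [Module R N] (e : M ≃ₗ[R] N)
    {K B : Submodule R M} {K' B' : Submodule R N}
    (hK : K.map (e : M →ₗ[R] N) = K') (hB : B.map (e : M →ₗ[R] N) = B') :
    (K ⧸ B.comap K.subtype) ≃ₗ[R] K' ⧸ B'.comap K'.subtype :=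
  Submodule.Quotient.equiv _ _ ((e.submoduleMap K).trans (LinearEquiv.ofEq _ _ hK)) <| by
    subst hK hB
    ext ⟨_, x, hxK, rfl⟩
    simp only [Submodule.mem_map, Submodule.mem_comap, Submodule.coe_subtype]
    constructor
    · rintro ⟨x', hx', hxx'⟩
      exact ⟨x', hx', congrArg Subtype.val hxx'⟩
    · rintro ⟨x', hx', hxx'⟩
      obtain rfl := e.injective hxx'
      exact ⟨⟨x', hxK⟩, hx', rfl⟩

namespace DirectSum

variable {R ι : Type*} [Semiring R] [DecidableEq ι] {M : ι → Type*}
  [∀ i, AddCommMonoid (M i)] [∀ i, Module R (M i)]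

noncomputable def lequivOfForallEq (i₀ : ι) (h : ∀ i, i = i₀) : (⨁ i, M i) ≃ₗ[R] M i₀ :=
  LinearEquiv.ofLinearMap (f := component R ι M i₀) (g := lof R ι M i₀) (by ext; simp) <|
    linearMap_ext R fun i => by
      obtain rfl := h i
      ext
      simp

lemma range_eq_sup_of_forall_eq_or_eq {N : Type*} [AddCommMonoid N] [Module R N]
    (f : (⨁ i, M i) →ₗ[R] N) (a b : ι) (h : ∀ i, i = a ∨ i = b) :
    LinearMap.range f =
      LinearMap.range (f ∘ₗ lof R ι M a) ⊔ LinearMap.range (f ∘ₗ lof R ι M b) := by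
  refine le_antisymm ?_ (sup_le (LinearMap.range_comp_le_range _ _)
    (LinearMap.range_comp_le_range _ _))
  rintro _ ⟨x, rfl⟩
  induction x using DirectSum.induction_on with
  | zero => simp
  | of i y =>
    rw [← lof_eq_of R]
    rcases h i with rfl | rfl
    · exact Submodule.mem_sup_left (LinearMap.mem_range_self _ y)
    · exact Submodule.mem_sup_right (LinearMap.mem_range_self _ y)
  | add x y hx hy =>
    rw [map_add]
    exact add_mem hx hy

end DirectSum

namespace SchwIdx

abbrev mid (p q : ℤ) : SchwIdx p q (p + q - 2) :=
  ⟨(p - 1, q - 1), by simp only [schwCond]; omega⟩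

abbrev preD1 (p q : ℤ) : SchwIdx p q (p + q - 2 - 1) :=
  ⟨(p - 2, q - 1), by simp only [schwCond]; omega⟩

abbrev preD2 (p q : ℤ) : SchwIdx p q (p + q - 2 - 1) :=
  ⟨(p - 1, q - 2), by simp only [schwCond]; omega⟩

lemma eq_mid {p q : ℤ} : ∀ i : SchwIdx p q (p + q - 2), i = mid p q
  | ⟨(r, s), h⟩ => by
    simp only [schwCond] at h
    obtain ⟨rfl, rfl⟩ : r = p - 1 ∧ s = q - 1 := by omega
    rfl

lemma eq_preD1_or_eq_preD2 {p q : ℤ} :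
    ∀ i : SchwIdx p q (p + q - 2 - 1), i = preD1 p q ∨ i = preD2 p q
  | ⟨(r, s), h⟩ => by
    simp only [schwCond] at h
    obtain ⟨rfl, rfl⟩ | ⟨rfl, rfl⟩ : (r = p - 2 ∧ s = q - 1) ∨ (r = p - 1 ∧ s = q - 2) := by
      omega
    exacts [.inl rfl, .inr rfl]

end SchwIdx

section Schweitzer

open SchwIdx

variable (A : DoubleComplex) (p q : ℤ)

lemma DoubleComplex.lof_castX {k r s r' s' : ℤ} (h1 : r = r') (h2 : s = s')
    (hi : schwCond p q k (r, s)) (hj : schwCond p q k (r', s')) (x : A.X r s) :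
    lof ℂ (SchwIdx p q k) (fun i => A.X i.1.1 i.1.2) ⟨(r, s), hi⟩ x =
      lof ℂ (SchwIdx p q k) (fun i => A.X i.1.1 i.1.2) ⟨(r', s'), hj⟩ (A.castX h1 h2 x) := by
  subst h1 h2
  rfl

lemma schwLCast_lof {k k' : ℤ} (h : k = k') (i : SchwIdx p q k) (x : A.X i.1.1 i.1.2) :
    schwLCast A p q h (lof ℂ (SchwIdx p q k) (fun i => A.X i.1.1 i.1.2) i x) =
      lof ℂ (SchwIdx p q k') (fun i => A.X i.1.1 i.1.2) ⟨i.1, h ▸ i.2⟩ x := by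
  subst h
  rfl

lemma schwD_lof_mid (y : A.X (p - 1) (q - 1)) :
    schwD A p q (p + q - 2) (lof ℂ _ _ (mid p q) y) =
      lof ℂ (SchwIdx p q (p + q - 2 + 1)) (fun i => A.X i.1.1 i.1.2)
        ⟨(p - 1 + 1, q - 1 + 1), by simp only [schwCond]; omega⟩
        (A.d1 (p - 1) (q - 1 + 1) (A.d2 (p - 1) (q - 1) y)) := by
  simp [schwD]

lemma schwD_lof_mid_eq_zero_iff (y : A.X (p - 1) (q - 1)) :
    schwD A p q (p + q - 2) (lof ℂ _ _ (mid p q) y) = 0 ↔ ddbar A p q y = 0 := by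
  rw [schwD_lof_mid, ddbar, LinearMap.comp_apply, LinearMap.comp_apply, LinearEquiv.coe_coe,
    LinearEquiv.map_eq_zero_iff]
  exact DFinsupp.single_eq_zero

lemma schwDFrom_lof_preD1 (x : A.X (p - 2) (q - 1)) :
    schwDFrom A p q (p + q - 2) (lof ℂ _ _ (preD1 p q) x) =
      lof ℂ _ _ (mid p q)
        (A.castX (show p - 2 + 1 = p - 1 by omega) rfl (A.d1 (p - 2) (q - 1) x)) := by
  have hd1 : schwCond p q (p + q - 2 - 1 + 1) (p - 2 + 1, q - 1) := by
    simp only [schwCond]; omega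
  have hd2 : ¬ schwCond p q (p + q - 2 - 1 + 1) (p - 2, q - 1 + 1) := by
    simp only [schwCond]; omega
  simp only [schwDFrom, schwD, LinearMap.comp_apply, LinearEquiv.coe_coe, toModule_lof,
    dif_neg (show p + q - 2 - 1 ≠ p + q - 2 by omega), dif_pos hd1, dif_neg hd2, add_zero]
  rw [schwLCast_lof]
  exact A.lof_castX p q _ rfl _ _ _

lemma schwDFrom_lof_preD2 (x : A.X (p - 1) (q - 2)) :
    schwDFrom A p q (p + q - 2) (lof ℂ _ _ (preD2 p q) x) =
      lof ℂ _ _ (mid p q)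
        (A.castX rfl (show q - 2 + 1 = q - 1 by omega) (A.d2 (p - 1) (q - 2) x)) := by
  have hd1 : ¬ schwCond p q (p + q - 2 - 1 + 1) (p - 1 + 1, q - 2) := by
    simp only [schwCond]; omega
  have hd2 : schwCond p q (p + q - 2 - 1 + 1) (p - 1, q - 2 + 1) := by
    simp only [schwCond]; omega
  simp only [schwDFrom, schwD, LinearMap.comp_apply, LinearEquiv.coe_coe, toModule_lof,
    dif_neg (show p + q - 2 - 1 ≠ p + q - 2 by omega), dif_neg hd1, dif_pos hd2, zero_add]
  rw [schwLCast_lof]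
  exact A.lof_castX p q rfl _ _ _ _

noncomputable def schwMidEquiv : SchwL A p q (p + q - 2) ≃ₗ[ℂ] A.X (p - 1) (q - 1) :=
  lequivOfForallEq (mid p q) eq_mid

lemma map_schwMidEquiv_ker :
    (LinearMap.ker (schwD A p q (p + q - 2))).map (schwMidEquiv A p q : _ →ₗ[ℂ] _) =
      LinearMap.ker (ddbar A p q) := by
  rw [Submodule.map_equiv_eq_comap_symm]
  ext y
  exact schwD_lof_mid_eq_zero_iff A p q y

lemma map_schwMidEquiv_range :
    (LinearMap.range (schwDFrom A p q (p + q - 2))).map (schwMidEquiv A p q : _ →ₗ[ℂ] _) =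
      LinearMap.range ((A.castX (show p - 2 + 1 = p - 1 by omega) rfl).toLinearMap ∘ₗ
          A.d1 (p - 2) (q - 1)) ⊔
        LinearMap.range ((A.castX rfl (show q - 2 + 1 = q - 1 by omega)).toLinearMap ∘ₗ
          A.d2 (p - 1) (q - 2)) := by
  rw [← Submodule.map_symm_eq_iff, Submodule.map_sup, ← LinearMap.range_comp,
    ← LinearMap.range_comp, range_eq_sup_of_forall_eq_or_eq _ _ _ eq_preD1_or_eq_preD2]
  congr 2 <;> refine LinearMap.ext fun x => ?_
  · exact (schwDFrom_lof_preD1 A p q x).symm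
  · exact (schwDFrom_lof_preD2 A p q x).symm

end Schweitzer

/-- The `(p+q-2)`-nd cohomology of the Schweitzer complex `L_{p,q}(A)` is the
Aeppli cohomology of `A` in bidegree `(p-1,q-1)`:
`ker(∂∂̄ : A^{p-1,q-1} → A^{p,q}) / (∂ A^{p-2,q-1} + ∂̄ A^{p-1,q-2})`. -/
theorem schwCoh_aeppli (A : DoubleComplex) (p q : ℤ) :
    Nonempty (SchwCoh A p q (p + q - 2) ≃ₗ[ℂ] Aeppli A p q) :=
  ⟨(schwMidEquiv A p q).subquotientCongr (map_schwMidEquiv_ker A p q)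
    (map_schwMidEquiv_range A p q)⟩
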